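/- The triple u(x,y,t) = U₀/t, s(x,y,t) = x²/(4t) + b₃x/(a₃√t) + y²/(4σt) + c₃y/(2σU₀√t) + c₄, φ(x,y,t) = −(x²+σy²)/(8δt²) + (c₂−U₀)/t solves the dispersionless Davey–Stewartson system u_t + (u s_x)_x + σ(u s_y)_y = 0, s_t + (1/2)(s_x² + σ s_y²) − δφ = 0, σφ_yy − φ_xx + u_xx + σu_yy = 0 on t > 0, provided U₀ is a root of 4δU³ + (2b₃²/a₃² − 4c₂δ)U² + (1/2)σc₃² = 0. -/

import Mathlib

noncomputable section

/-- Partial derivative in the first (x) argument. -/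
def px (f : ℝ → ℝ → ℝ → ℝ) : ℝ → ℝ → ℝ → ℝ :=
  fun x y t => deriv (fun x' => f x' y t) x

/-- Partial derivative in the second (y) argument. -/
def py (f : ℝ → ℝ → ℝ → ℝ) : ℝ → ℝ → ℝ → ℝ :=
  fun x y t => deriv (fun y' => f x y' t) y

/-- Partial derivative in the third (t) argument. -/
def pt (f : ℝ → ℝ → ℝ → ℝ) : ℝ → ℝ → ℝ → ℝ :=
  fun x y t => deriv (fun t' => f x y t') t

/-- The dispersionless Davey–Stewartson system at a point (x,y,t):
u_t + (u s_x)_x + σ(u s_y)_y = 0,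
s_t + (1/2)(s_x² + σ s_y²) − δφ = 0,
σφ_yy − φ_xx + u_xx + σu_yy = 0. -/
def dDSeq (σ δ : ℝ) (u s φ : ℝ → ℝ → ℝ → ℝ) (x y t : ℝ) : Prop :=
  pt u x y t + px (fun x y t => u x y t * px s x y t) x y t
      + σ * py (fun x y t => u x y t * py s x y t) x y t = 0 ∧
  pt s x y t + (1/2) * ((px s x y t) ^ 2 + σ * (py s x y t) ^ 2) - δ * φ x y t = 0 ∧
  σ * py (py φ) x y t - px (px φ) x y t + px (px u) x y t + σ * py (py u) x y t = 0

/-! The profiles are polynomials of degree at most two in `x` and in `y` with coefficients in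
`1/t` and `1/√t`, so every partial derivative is read off from the coefficients. The continuity
equation then holds identically and the potential equation reduces to `σ² = 1`. In the
Hamilton–Jacobi equation the `x²`, `y²`, `x/(t√t)` and `y/(t√t)` terms cancel (using `σ² = 1`),
and what remains is `1/(4U₀²t)` times the cubic in `U₀`. -/

section Partials

variable {f : ℝ → ℝ → ℝ → ℝ} {x y t : ℝ}

lemma px_eq_of_quadratic {A B C : ℝ} (h : ∀ x', f x' y t = A * x' ^ 2 + B * x' + C) (x : ℝ) :
    px f x y t = 2 * A * x + B := by
  have hd : HasDerivAt (fun x' => A * x' ^ 2 + B * x' + C) (A * (2 * x) + B) x := by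
    simpa using
      (((hasDerivAt_pow 2 x).const_mul A).add ((hasDerivAt_id' x).const_mul B)).add_const C
  rw [px, funext h, hd.deriv]; ring

lemma py_eq_of_quadratic {A B C : ℝ} (h : ∀ y', f x y' t = A * y' ^ 2 + B * y' + C) (y : ℝ) :
    py f x y t = 2 * A * y + B :=
  px_eq_of_quadratic (f := fun y x t => f x y t) h y

lemma px_px_eq_of_quadratic {A B C : ℝ} (h : ∀ x', f x' y t = A * x' ^ 2 + B * x' + C) :
    px (px f) x y t = 2 * A := by
  have h' : ∀ x', px f x' y t = 0 * x' ^ 2 + 2 * A * x' + B := fun x' => by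
    rw [px_eq_of_quadratic h]; ring
  rw [px_eq_of_quadratic h']; ring

lemma py_py_eq_of_quadratic {A B C : ℝ} (h : ∀ y', f x y' t = A * y' ^ 2 + B * y' + C) :
    py (py f) x y t = 2 * A := by
  have h' : ∀ y', py f x y' t = 0 * y' ^ 2 + 2 * A * y' + B := fun y' => by
    rw [py_eq_of_quadratic h]; ring
  rw [py_eq_of_quadratic h']; ring

lemma pt_eq_of_forall_pos {g : ℝ → ℝ} (h : ∀ t', 0 < t' → f x y t' = g t') (ht : 0 < t) :
    pt f x y t = deriv g t :=
  Filter.EventuallyEq.deriv_eq (Filter.eventually_of_mem (Ioi_mem_nhds ht) h)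

end Partials

def phaseProfile (σ a₃ b₃ c₃ c₄ U₀ x y t : ℝ) : ℝ :=
  x ^ 2 / (4 * t) + b₃ * x / (a₃ * Real.sqrt t)
    + y ^ 2 / (4 * σ * t) + c₃ * y / (2 * σ * U₀ * Real.sqrt t) + c₄

def potentialProfile (σ δ c₂ U₀ x y t : ℝ) : ℝ :=
  -(x ^ 2 + σ * y ^ 2) / (8 * δ * t ^ 2) + (c₂ - U₀) / t

section Profiles

variable {σ δ a₃ b₃ c₂ c₃ c₄ U₀ x y t : ℝ} {u s φ : ℝ → ℝ → ℝ → ℝ}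

lemma px_px_of_eq_div (hu : ∀ x y t, 0 < t → u x y t = U₀ / t) (ht : 0 < t) :
    px (px u) x y t = 0 := by
  simpa using px_px_eq_of_quadratic (A := 0) (B := 0) (C := U₀ / t)
    (fun x' => by simp [hu x' y t ht])

lemma py_py_of_eq_div (hu : ∀ x y t, 0 < t → u x y t = U₀ / t) (ht : 0 < t) :
    py (py u) x y t = 0 := by
  simpa using py_py_eq_of_quadratic (A := 0) (B := 0) (C := U₀ / t)
    (fun y' => by simp [hu x y' t ht])

lemma pt_of_eq_div (hu : ∀ x y t, 0 < t → u x y t = U₀ / t) (ht : 0 < t) :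
    pt u x y t = -U₀ / t ^ 2 := by
  have hd : HasDerivAt (fun t => U₀ / t) (U₀ * -(t ^ 2)⁻¹) t := by
    simpa [div_eq_mul_inv] using (hasDerivAt_inv ht.ne').const_mul U₀
  rw [pt_eq_of_forall_pos (hu x y) ht, hd.deriv]
  ring

lemma px_of_phaseProfile
    (hs : ∀ x y t, 0 < t → s x y t = phaseProfile σ a₃ b₃ c₃ c₄ U₀ x y t)
    (ht : 0 < t) (x : ℝ) : px s x y t = x / (2 * t) + b₃ / a₃ / √t := by
  rw [px_eq_of_quadratic (A := 1 / (4 * t)) (B := b₃ / (a₃ * √t))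
    (C := y ^ 2 / (4 * σ * t) + c₃ * y / (2 * σ * U₀ * √t) + c₄)
    (fun x' => by rw [hs x' y t ht, phaseProfile]; ring)]
  ring

lemma py_of_phaseProfile
    (hs : ∀ x y t, 0 < t → s x y t = phaseProfile σ a₃ b₃ c₃ c₄ U₀ x y t)
    (ht : 0 < t) (y : ℝ) : py s x y t = y / (2 * σ * t) + c₃ / (2 * σ * U₀ * √t) := by
  rw [py_eq_of_quadratic (A := 1 / (4 * σ * t)) (B := c₃ / (2 * σ * U₀ * √t))
    (C := x ^ 2 / (4 * t) + b₃ * x / (a₃ * √t) + c₄)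
    (fun y' => by rw [hs x y' t ht, phaseProfile]; ring)]
  ring

lemma pt_of_phaseProfile (hs : ∀ x y t, 0 < t → s x y t = phaseProfile σ a₃ b₃ c₃ c₄ U₀ x y t)
    (ht : 0 < t) :
    pt s x y t = -(x ^ 2 / 4 + y ^ 2 / (4 * σ)) / t ^ 2
      - (b₃ / a₃ * x + c₃ * y / (2 * σ * U₀)) / (2 * t * √t) := by
  set P := x ^ 2 / 4 + y ^ 2 / (4 * σ)
  set Q := b₃ / a₃ * x + c₃ * y / (2 * σ * U₀)
  have hsqrt : √t ≠ 0 := Real.sqrt_ne_zero'.2 ht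
  have hd : HasDerivAt (fun t' => P * t'⁻¹ + Q * (√t')⁻¹ + c₄)
      (P * -(t ^ 2)⁻¹ + Q * (-(1 / (2 * √t)) / √t ^ 2)) t :=
    (((hasDerivAt_inv ht.ne').const_mul P).add
      (((Real.hasDerivAt_sqrt ht.ne').inv hsqrt).const_mul Q)).add_const c₄
  have hg : phaseProfile σ a₃ b₃ c₃ c₄ U₀ x y
      = fun t' => P * t'⁻¹ + Q * (√t')⁻¹ + c₄ := by
    funext t'; simp only [phaseProfile, P, Q]; ring
  rw [pt_eq_of_forall_pos (hs x y) ht, hg, hd.deriv, Real.sq_sqrt ht.le]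
  field_simp
  ring

lemma px_px_of_potentialProfile
    (hφ : ∀ x y t, 0 < t → φ x y t = potentialProfile σ δ c₂ U₀ x y t)
    (ht : 0 < t) : px (px φ) x y t = -1 / (4 * δ * t ^ 2) := by
  rw [px_px_eq_of_quadratic (A := -1 / (8 * δ * t ^ 2)) (B := 0)
    (C := -(σ * y ^ 2) / (8 * δ * t ^ 2) + (c₂ - U₀) / t)
    (fun x' => by rw [hφ x' y t ht, potentialProfile]; ring)]
  ring

lemma py_py_of_potentialProfile
    (hφ : ∀ x y t, 0 < t → φ x y t = potentialProfile σ δ c₂ U₀ x y t)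
    (ht : 0 < t) : py (py φ) x y t = -σ / (4 * δ * t ^ 2) := by
  rw [py_py_eq_of_quadratic (A := -σ / (8 * δ * t ^ 2)) (B := 0)
    (C := -x ^ 2 / (8 * δ * t ^ 2) + (c₂ - U₀) / t)
    (fun y' => by rw [hφ x y' t ht, potentialProfile]; ring)]
  ring

lemma px_mul_px_of_phaseProfile (hu : ∀ x y t, 0 < t → u x y t = U₀ / t)
    (hs : ∀ x y t, 0 < t → s x y t = phaseProfile σ a₃ b₃ c₃ c₄ U₀ x y t) (ht : 0 < t) :
    px (fun x y t => u x y t * px s x y t) x y t = U₀ / (2 * t ^ 2) := by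
  rw [px_eq_of_quadratic (A := 0) (B := U₀ / (2 * t ^ 2)) (C := U₀ / t * (b₃ / a₃ / √t))
    (fun x' => by rw [hu x' y t ht, px_of_phaseProfile hs ht]; field_simp; ring)]
  ring

lemma py_mul_py_of_phaseProfile (hu : ∀ x y t, 0 < t → u x y t = U₀ / t)
    (hs : ∀ x y t, 0 < t → s x y t = phaseProfile σ a₃ b₃ c₃ c₄ U₀ x y t) (ht : 0 < t) :
    py (fun x y t => u x y t * py s x y t) x y t = U₀ / (2 * σ * t ^ 2) := by
  rw [py_eq_of_quadratic (A := 0) (B := U₀ / (2 * σ * t ^ 2))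
    (C := U₀ / t * (c₃ / (2 * σ * U₀ * √t)))
    (fun y' => by rw [hu x y' t ht, py_of_phaseProfile hs ht]; field_simp; ring)]
  ring

lemma dDS_continuity (hσ : σ ≠ 0) (hu : ∀ x y t, 0 < t → u x y t = U₀ / t)
    (hs : ∀ x y t, 0 < t → s x y t = phaseProfile σ a₃ b₃ c₃ c₄ U₀ x y t) (ht : 0 < t) :
    pt u x y t + px (fun x y t => u x y t * px s x y t) x y t
      + σ * py (fun x y t => u x y t * py s x y t) x y t = 0 := by
  rw [pt_of_eq_div hu ht, px_mul_px_of_phaseProfile hu hs ht,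
    py_mul_py_of_phaseProfile hu hs ht]
  field_simp
  ring

lemma dDS_hamiltonJacobi (hσ : σ ^ 2 = 1) (hδ : δ ≠ 0) (hU₀ : U₀ ≠ 0)
    (hroot : 4 * δ * U₀ ^ 3 + (2 * b₃ ^ 2 / a₃ ^ 2 - 4 * c₂ * δ) * U₀ ^ 2
      + (1/2) * σ * c₃ ^ 2 = 0)
    (hs : ∀ x y t, 0 < t → s x y t = phaseProfile σ a₃ b₃ c₃ c₄ U₀ x y t)
    (hφ : ∀ x y t, 0 < t → φ x y t = potentialProfile σ δ c₂ U₀ x y t) (ht : 0 < t) :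
    pt s x y t + (1/2) * ((px s x y t) ^ 2 + σ * (py s x y t) ^ 2) - δ * φ x y t = 0 := by
  have hσ0 : σ ≠ 0 := by rintro rfl; norm_num at hσ
  rw [pt_of_phaseProfile hs ht, px_of_phaseProfile hs ht, py_of_phaseProfile hs ht, hφ x y t ht,
    potentialProfile]
  rw [mul_div_assoc, ← div_pow] at hroot
  obtain ⟨r, hr, rfl⟩ : ∃ r, 0 < r ∧ t = r ^ 2 :=
    ⟨√t, Real.sqrt_pos.2 ht, (Real.sq_sqrt ht.le).symm⟩
  rw [Real.sqrt_sq hr.le]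
  generalize b₃ / a₃ = k at *
  field_simp
  linear_combination 64 * σ * r ^ 2 * hroot + (32 * U₀ ^ 2 * y ^ 2 - 32 * c₃ ^ 2 * r ^ 2) * hσ

lemma dDS_potential (hσ : σ ^ 2 = 1) (hu : ∀ x y t, 0 < t → u x y t = U₀ / t)
    (hφ : ∀ x y t, 0 < t → φ x y t = potentialProfile σ δ c₂ U₀ x y t) (ht : 0 < t) :
    σ * py (py φ) x y t - px (px φ) x y t + px (px u) x y t + σ * py (py u) x y t = 0 := by
  rw [py_py_of_potentialProfile hφ ht, px_px_of_potentialProfile hφ ht, px_px_of_eq_div hu ht,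
    py_py_of_eq_div hu ht]
  linear_combination -hσ / (4 * δ * t ^ 2)

end Profiles

theorem stmt_9_general (σ δ a₃ b₃ c₂ c₃ c₄ U₀ : ℝ)
    (hσ : σ = 1 ∨ σ = -1) (hδ : δ ≠ 0) (hU₀ : U₀ ≠ 0)
    (hroot : 4 * δ * U₀ ^ 3 + (2 * b₃ ^ 2 / a₃ ^ 2 - 4 * c₂ * δ) * U₀ ^ 2
      + (1/2) * σ * c₃ ^ 2 = 0)
    (u s φ : ℝ → ℝ → ℝ → ℝ)
    (hu : ∀ x y t, 0 < t → u x y t = U₀ / t)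
    (hs : ∀ x y t, 0 < t → s x y t
      = x ^ 2 / (4 * t) + b₃ * x / (a₃ * Real.sqrt t)
        + y ^ 2 / (4 * σ * t) + c₃ * y / (2 * σ * U₀ * Real.sqrt t) + c₄)
    (hφ : ∀ x y t, 0 < t → φ x y t
      = -(x ^ 2 + σ * y ^ 2) / (8 * δ * t ^ 2) + (c₂ - U₀) / t) :
    ∀ x y t : ℝ, 0 < t → dDSeq σ δ u s φ x y t := by
  have hσ2 : σ ^ 2 = 1 := by rcases hσ with rfl | rfl <;> norm_num
  have hσ0 : σ ≠ 0 := by rintro rfl; norm_num at hσ2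
  intro x y t ht
  exact ⟨dDS_continuity hσ0 hu hs ht, dDS_hamiltonJacobi hσ2 hδ hU₀ hroot hs hφ ht,
    dDS_potential hσ2 hu hφ ht⟩

/-- The invariant solution u = U₀/t, s = x²/(4t) + b₃x/(a₃√t) + y²/(4σt) + c₃y/(2σU₀√t) + c₄,
φ = −(x²+σy²)/(8δt²) + (c₂−U₀)/t solves the dDS system on t > 0, provided U₀ is a root
of 4δU³ + (2b₃²/a₃² − 4c₂δ)U² + (1/2)σc₃² = 0. -/
theorem stmt_9 (σ δ a₃ b₃ c₂ c₃ c₄ U₀ : ℝ)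
    (hσ : σ = 1 ∨ σ = -1) (hδ : δ ≠ 0) (ha₃ : a₃ ≠ 0) (hU₀ : U₀ ≠ 0)
    (hroot : 4 * δ * U₀ ^ 3 + (2 * b₃ ^ 2 / a₃ ^ 2 - 4 * c₂ * δ) * U₀ ^ 2
      + (1/2) * σ * c₃ ^ 2 = 0)
    (u s φ : ℝ → ℝ → ℝ → ℝ)
    (hu : ∀ x y t, 0 < t → u x y t = U₀ / t)
    (hs : ∀ x y t, 0 < t → s x y t
      = x ^ 2 / (4 * t) + b₃ * x / (a₃ * Real.sqrt t)
        + y ^ 2 / (4 * σ * t) + c₃ * y / (2 * σ * U₀ * Real.sqrt t) + c₄)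
    (hφ : ∀ x y t, 0 < t → φ x y t
      = -(x ^ 2 + σ * y ^ 2) / (8 * δ * t ^ 2) + (c₂ - U₀) / t) :
    ∀ x y t : ℝ, 0 < t → dDSeq σ δ u s φ x y t :=
  stmt_9_general σ δ a₃ b₃ c₂ c₃ c₄ U₀ hσ hδ hU₀ hroot u s φ hu hs hφ
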